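/- Let ι be a nonempty index set and Γ : ι → M_N(ℂ) a family of positive definite matrices. For T ∈ M_N(ℂ), the following are equivalent: (i) T Γ_i = Γ_i T* and T* Γ_i = Γ_i T for all i ∈ ι; (ii) T is Hermitian (T = T*) and T Γ_i = Γ_i T for all i ∈ ι. -/

import Mathlib

/-!
`S = T - Tᴴ` anticommutes with `Γᵢ`, so it commutes with `Γᵢ²` and hence with `Γᵢ = √(Γᵢ²)`.
Then `S Γᵢ = -S Γᵢ`, and `Γᵢ` being invertible forces `S = 0`.
-/

open Matrix ComplexOrder

section StrictlyPositive

variable {A : Type*} [PartialOrder A] [Ring A] [StarRing A] [TopologicalSpace A] [Algebra ℝ A]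
  [StarOrderedRing A] [ContinuousFunctionalCalculus ℝ A IsSelfAdjoint] [NonnegSpectrumClass ℝ A]
  [IsTopologicalRing A] [T2Space A]

theorem Commute.of_mul_self_of_nonneg {a b : A} (ha : 0 ≤ a) (h : Commute (a * a) b) :
    Commute a b := by
  rw [← CFC.sqrt_mul_self a ha, CFC.sqrt]
  exact h.cfcₙ_nnreal _

theorem IsStrictlyPositive.eq_zero_of_mul_eq_neg_mul {a s : A} (ha : IsStrictlyPositive a)
    (h : s * a = -(a * s)) : s = 0 := by
  have h' : a * s = -(s * a) := by rw [h, neg_neg]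
  have hsq : Commute (a * a) s := calc
    a * a * s = -(a * (s * a)) := by rw [mul_assoc, h', mul_neg]
    _ = -(a * s) * a := by rw [neg_mul, mul_assoc]
    _ = s * (a * a) := by rw [← h, mul_assoc]
  have hcomm : a * s = s * a := (Commute.of_mul_self_of_nonneg ha.nonneg hsq).eq
  have hsa : (2 : ℝ) • (s * a) = 0 := by
    rw [two_smul]
    nth_rewrite 2 [h]
    rw [hcomm, add_neg_cancel]
  exact ha.isUnit.mul_left_eq_zero.mp (smul_eq_zero.mp hsa |>.resolve_left two_ne_zero)

end StrictlyPositive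

open scoped MatrixOrder in
theorem Matrix.PosDef.eq_zero_of_mul_eq_neg_mul {n 𝕜 : Type*} [Fintype n] [DecidableEq n]
    [RCLike 𝕜] {Q S : Matrix n n 𝕜} (hQ : Q.PosDef) (h : S * Q = -(Q * S)) : S = 0 :=
  hQ.isStrictlyPositive.eq_zero_of_mul_eq_neg_mul h

/-- For a nonempty family `Γ` of positive definite matrices: `T Γᵢ = Γᵢ Tᴴ` and
`Tᴴ Γᵢ = Γᵢ T` for all `i` if and only if `T` is Hermitian and commutes with every `Γᵢ`. -/
theorem mem_A_cap_Astar_iff_hermitian_commutes (N : ℕ)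
    (ι : Type*) [Nonempty ι]
    (Γ : ι → Matrix (Fin N) (Fin N) ℂ)
    (hΓ : ∀ i, (Γ i).PosDef)
    (T : Matrix (Fin N) (Fin N) ℂ) :
    ((∀ i, T * Γ i = Γ i * Tᴴ) ∧ (∀ i, Tᴴ * Γ i = Γ i * T)) ↔
      (T = Tᴴ ∧ ∀ i, T * Γ i = Γ i * T) := by
  constructor
  · rintro ⟨hT, hTstar⟩
    obtain ⟨i₀⟩ := ‹Nonempty ι›
    have hanti : (T - Tᴴ) * Γ i₀ = -(Γ i₀ * (T - Tᴴ)) := by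
      rw [Matrix.sub_mul, Matrix.mul_sub, hT, hTstar, neg_sub]
    have hherm : T = Tᴴ :=
      sub_eq_zero.mp ((hΓ i₀).eq_zero_of_mul_eq_neg_mul hanti)
    exact ⟨hherm, fun i => by rw [hT, ← hherm]⟩
  · rintro ⟨hherm, hcomm⟩
    rw [← hherm]
    exact ⟨hcomm, hcomm⟩
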